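/- arXiv:2605.30153 — 2 statements merged into one kernel-verified Lean document; each statement's English description precedes it below -/
import Mathlib

section
/- Let μ be a probability measure supported on a k-dimensional subspace V of R^d with orthonormal basis A, and set q_t(x) = ∫_V φ_t(x−y; d) dμ(y) for t > 0, where φ_t(·; d) is the density of N(0, t I_d). Then q_t(x) = (2πt)^{-(d−k)/2} e^{−‖x − AAᵀx‖²/(2t)} · μ(V) · p_t^low(Aᵀx), where p_t^low is the density of (Aᵀ)_# (μ/μ(V)) ∗ N(0, t I_k) on R^k. -/
/-!
Write `P = A Aᵀ` for the orthogonal projection onto `V = range A`. For `y = A w ∈ V`, Pythagoras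
splits `‖x - y‖² = ‖x - P x‖² + ‖Aᵀx - w‖²`, so the `d`-dimensional Gaussian kernel factors into
a normal Gaussian factor, independent of `y`, times the `k`-dimensional kernel at `Aᵀx - Aᵀy`.
Since `μ` is carried by `V`, the normal factor comes out of the integral, and what remains is
`μ(V) p_t^low(Aᵀx)`.
-/

open MeasureTheory Real

/-- Density of `N(0, t I_m)` on `ℝ^m`. -/
noncomputable def gpdf (m : ℕ) (t : ℝ) (x : EuclideanSpace ℝ (Fin m)) : ℝ :=
  (2 * π * t) ^ (-(m : ℝ) / 2) * Real.exp (-‖x‖ ^ 2 / (2 * t))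

section Isometry

open ContinuousLinearMap

variable {E F : Type*} [NormedAddCommGroup E] [InnerProductSpace ℝ E] [CompleteSpace E]
  [NormedAddCommGroup F] [InnerProductSpace ℝ F] [CompleteSpace F]
  {A : E →L[ℝ] F}

lemma norm_map_of_adjoint_apply_apply (hA : ∀ z, adjoint A (A z) = z) (z : E) :
    ‖A z‖ = ‖z‖ := by
  have hsq : ‖A z‖ ^ 2 = ‖z‖ ^ 2 := by
    rw [← real_inner_self_eq_norm_sq, ← real_inner_self_eq_norm_sq,
      ← adjoint_inner_left, hA]
  exact (sq_eq_sq₀ (norm_nonneg _) (norm_nonneg _)).mp hsq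

lemma inner_sub_map_adjoint_map_eq_zero (hA : ∀ z, adjoint A (A z) = z) (x : F) (v : E) :
    inner ℝ (x - A (adjoint A x)) (A v) = 0 := by
  rw [← adjoint_inner_left, map_sub, hA, sub_self, inner_zero_left]

lemma norm_sub_map_sq_eq (hA : ∀ z, adjoint A (A z) = z) (x : F) (w : E) :
    ‖x - A w‖ ^ 2 = ‖x - A (adjoint A x)‖ ^ 2 + ‖adjoint A x - w‖ ^ 2 := by
  have hsplit : x - A w = (x - A (adjoint A x)) + A (adjoint A x - w) := by
    rw [map_sub]; abel
  rw [hsplit, norm_add_sq_real, inner_sub_map_adjoint_map_eq_zero hA,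
    norm_map_of_adjoint_apply_apply hA]
  ring

end Isometry

lemma gpdf_eq_mul_gpdf {m n : ℕ} {t : ℝ} (ht : 0 < t) {u : EuclideanSpace ℝ (Fin m)}
    {v : EuclideanSpace ℝ (Fin n)} {a : ℝ} (h : ‖u‖ ^ 2 = a ^ 2 + ‖v‖ ^ 2) :
    gpdf m t u = (2 * π * t) ^ (-((m : ℝ) - n) / 2) * Real.exp (-a ^ 2 / (2 * t)) *
      gpdf n t v := by
  have hpow : (2 * π * t) ^ (-(m : ℝ) / 2) =
      (2 * π * t) ^ (-((m : ℝ) - n) / 2) * (2 * π * t) ^ (-(n : ℝ) / 2) := by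
    rw [← Real.rpow_add (by positivity)]; ring_nf
  have hexp : Real.exp (-(a ^ 2 + ‖v‖ ^ 2) / (2 * t)) =
      Real.exp (-a ^ 2 / (2 * t)) * Real.exp (-‖v‖ ^ 2 / (2 * t)) := by
    rw [← Real.exp_add]; ring_nf
  rw [gpdf, gpdf, h, hpow, hexp]
  ring

/-- Factorization of the Gaussian-smoothed density of a subspace-supported measure:
`q_t(x) = (2πt)^{-(d−k)/2} e^{−‖x−AAᵀx‖²/(2t)} μ(V) p_t^low(Aᵀx)`. -/
theorem stmt4 {d k : ℕ} (A : EuclideanSpace ℝ (Fin k) →L[ℝ] EuclideanSpace ℝ (Fin d))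
    (hA : ∀ z, ContinuousLinearMap.adjoint A (A z) = z)
    (μ : Measure (EuclideanSpace ℝ (Fin d))) [IsProbabilityMeasure μ]
    (hsupp : μ (Set.range A)ᶜ = 0)
    (t : ℝ) (ht : 0 < t)
    (pLow : EuclideanSpace ℝ (Fin k) → ℝ)
    (hpLow : ∀ z, pLow z = (μ (Set.range A)).toReal⁻¹ *
      ∫ y, gpdf k t (z - ContinuousLinearMap.adjoint A y) ∂μ)
    (x : EuclideanSpace ℝ (Fin d)) :
    (∫ y, gpdf d t (x - y) ∂μ)
      = (2 * π * t) ^ (-((d : ℝ) - k) / 2) *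
        Real.exp (-‖x - A (ContinuousLinearMap.adjoint A x)‖ ^ 2 / (2 * t)) *
        (μ (Set.range A)).toReal * pLow (ContinuousLinearMap.adjoint A x) := by
  set B := ContinuousLinearMap.adjoint A
  set c := (2 * π * t) ^ (-((d : ℝ) - k) / 2) * Real.exp (-‖x - A (B x)‖ ^ 2 / (2 * t))
  have hV : μ (Set.range A) = 1 := (measure_of_measure_compl_eq_zero hsupp).trans measure_univ
  have hfactor : ∀ w, gpdf d t (x - A w) = c * gpdf k t (B x - B (A w)) := fun w => by
    rw [hA w]; exact gpdf_eq_mul_gpdf ht (norm_sub_map_sq_eq hA x w)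
  have hae : ∀ᵐ y ∂μ, y ∈ Set.range A := mem_ae_iff.mpr hsupp
  calc ∫ y, gpdf d t (x - y) ∂μ = ∫ y, c * gpdf k t (B x - B y) ∂μ :=
        integral_congr_ae (by filter_upwards [hae] with y ⟨w, hw⟩ using hw ▸ hfactor w)
    _ = c * (μ (Set.range A)).toReal * pLow (B x) := by
        rw [integral_const_mul, hpLow, hV]; simp
end

section
/- Let X^{(1)}, …, X^{(N)} be i.i.d. samples from a probability measure p⋆ on R^d supported on a finite union of subspaces V_1, …, V_M with p⋆(V_i ∩ V_j) = 0 for i ≠ j, and define p̂_t(x) = (1/N) Σ_j φ_t(x − X^{(j)}; d). Then Var(p̂_t(x)) ≤ (1/((2πt)^{d/2} N)) Σ_{i=1}^M e^{−‖x − proj_i(x)‖²/(2t)} q_t(i, x), where q_t(i,x) = ∫_{V_i} φ_t(x − y; d) dp_i⋆(y), p_i⋆ is the restriction of p⋆ to V_i, and proj_i is orthogonal projection onto V_i. -/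
open MeasureTheory ProbabilityTheory Real

/-!
The variance of a mean of `N` independent copies is `1/N` times the variance of one copy, which
is at most the second moment `∫ φ_t(x - y)² dp⋆(y)`. A point `y ∈ Vᵢ` is no closer to `x` than
`projᵢ x`, so `φ_t(x - y) ≤ (2πt)^{-d/2} e^{-‖x - projᵢ x‖²/(2t)}` on `Vᵢ`; bounding one factor of
`φ_t(x - y)²` this way and integrating over the `Vᵢ`, which cover `p⋆`-almost everything, gives
the claim.
-/

theorem Submodule.norm_sub_starProjection_le {𝕜 E : Type*} [RCLike 𝕜] [NormedAddCommGroup E]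
    [InnerProductSpace 𝕜 E] {K : Submodule 𝕜 E} [K.HasOrthogonalProjection] (x : E) {y : E}
    (hy : y ∈ K) : ‖x - K.starProjection x‖ ≤ ‖x - y‖ := by
  rw [Submodule.starProjection_minimal]
  exact ciInf_le ⟨0, Set.forall_mem_range.2 fun _ => norm_nonneg _⟩ (⟨y, hy⟩ : K)

section Gaussian

variable {m : ℕ} {t : ℝ}

theorem continuous_gpdf : Continuous (gpdf m t) := by
  unfold gpdf
  fun_prop

theorem gpdf_nonneg (ht : 0 ≤ t) (x : EuclideanSpace ℝ (Fin m)) : 0 ≤ gpdf m t x := by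
  unfold gpdf
  positivity

theorem gpdf_le_of_le_norm (ht : 0 < t) {r : ℝ} (hr : 0 ≤ r) {x : EuclideanSpace ℝ (Fin m)}
    (hrx : r ≤ ‖x‖) : gpdf m t x ≤ (2 * π * t) ^ (-(m : ℝ) / 2) * exp (-r ^ 2 / (2 * t)) := by
  unfold gpdf
  gcongr

theorem norm_gpdf_le (ht : 0 < t) (x : EuclideanSpace ℝ (Fin m)) :
    ‖gpdf m t x‖ ≤ (2 * π * t) ^ (-(m : ℝ) / 2) := by
  rw [Real.norm_of_nonneg (gpdf_nonneg ht.le x)]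
  simpa using gpdf_le_of_le_norm ht le_rfl (norm_nonneg x)

theorem gpdf_sub_le_of_mem (ht : 0 < t) (K : Submodule ℝ (EuclideanSpace ℝ (Fin m)))
    (x : EuclideanSpace ℝ (Fin m)) {y : EuclideanSpace ℝ (Fin m)} (hy : y ∈ K) :
    gpdf m t (x - y) ≤
      (2 * π * t) ^ (-(m : ℝ) / 2) * exp (-‖x - K.starProjection x‖ ^ 2 / (2 * t)) :=
  gpdf_le_of_le_norm ht (norm_nonneg _) (K.norm_sub_starProjection_le x hy)

end Gaussian

section Integral

variable {α ι : Type*} [MeasurableSpace α] [Fintype ι] {p : Measure α} {S : ι → Set α}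

theorem integral_le_sum_setIntegral_of_measure_compl_iUnion_eq_zero
    (hS : p (⋃ i, S i)ᶜ = 0) {f : α → ℝ} (hf : Integrable f p) (hf0 : 0 ≤ f) :
    ∫ y, f y ∂p ≤ ∑ i, ∫ y in S i, f y ∂p := by
  have hsum : Integrable f (Measure.sum fun i => p.restrict (S i)) := by
    rw [Measure.sum_fintype]
    exact integrable_finsetSum_measure.2 fun i _ => hf.restrict
  calc ∫ y, f y ∂p = ∫ y in ⋃ i, S i, f y ∂p := by
        rw [Measure.restrict_eq_self_of_ae_mem (s := ⋃ i, S i) (mem_ae_iff.2 hS)]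
    _ ≤ ∫ y, f y ∂(Measure.sum fun i => p.restrict (S i)) :=
        integral_mono_measure Measure.restrict_iUnion_le (.of_forall hf0) hsum
    _ = ∑ i, ∫ y in S i, f y ∂p := by
        rw [Measure.sum_fintype, integral_finsetSum_measure fun i _ => hf.restrict]

theorem integral_sq_le_sum_mul_setIntegral (hS : p (⋃ i, S i)ᶜ = 0)
    (hSm : ∀ i, MeasurableSet (S i)) {f : α → ℝ} (hf : Integrable f p)
    (hf2 : Integrable (fun y => f y ^ 2) p) {a : ι → ℝ}
    (hfa : ∀ i, ∀ y ∈ S i, f y ^ 2 ≤ a i * f y) :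
    ∫ y, f y ^ 2 ∂p ≤ ∑ i, a i * ∫ y in S i, f y ∂p := by
  refine (integral_le_sum_setIntegral_of_measure_compl_iUnion_eq_zero hS hf2
    fun y => sq_nonneg (f y)).trans (Finset.sum_le_sum fun i _ => ?_)
  rw [← integral_const_mul]
  exact setIntegral_mono_on hf2.integrableOn (hf.integrableOn.const_mul _) (hSm i) (hfa i)

end Integral

section Variance

variable {Ω : Type*} [MeasurableSpace Ω] {μ : Measure Ω}

theorem variance_comp_le_integral_sq_map [IsProbabilityMeasure μ] {E : Type*} [MeasurableSpace E]
    {X : Ω → E} (hX : AEMeasurable X μ) {g : E → ℝ} (hg : Measurable g) :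
    variance (fun ω => g (X ω)) μ ≤ ∫ y, g y ^ 2 ∂(μ.map X) := by
  rw [integral_map hX (hg.pow_const 2).aestronglyMeasurable]
  exact variance_le_expectation_sq (hg.comp_aemeasurable hX).aestronglyMeasurable

theorem variance_mean_le {ι : Type*} [Fintype ι] {Y : ι → Ω → ℝ} (hY : ∀ j, MemLp (Y j) 2 μ)
    (hind : Pairwise fun j k => IndepFun (Y j) (Y k) μ) {B : ℝ}
    (hB : ∀ j, variance (Y j) μ ≤ B) :
    variance (fun ω => (Fintype.card ι : ℝ)⁻¹ * ∑ j, Y j ω) μ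
      ≤ (Fintype.card ι : ℝ)⁻¹ * B := by
  set n : ℝ := (Fintype.card ι : ℝ)
  have hsum : variance (fun ω => ∑ j, Y j ω) μ = ∑ j, variance (Y j) μ := by
    rw [← IndepFun.variance_sum (fun j _ => hY j) fun j _ k _ hjk => hind hjk]
    congr 1
    ext ω
    exact (Finset.sum_apply ω _ _).symm
  have hn : n⁻¹ ^ 2 * n = n⁻¹ := by
    rcases eq_or_ne n 0 with h | h
    · simp [h]
    · field_simp
  have hB_sum : ∑ j, variance (Y j) μ ≤ n * B := by
    simpa [n] using Finset.sum_le_sum fun j (_ : j ∈ Finset.univ) => hB j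
  calc variance (fun ω => n⁻¹ * ∑ j, Y j ω) μ = n⁻¹ ^ 2 * ∑ j, variance (Y j) μ := by
        rw [variance_const_mul, hsum]
    _ ≤ n⁻¹ ^ 2 * (n * B) := by gcongr
    _ = n⁻¹ * B := by rw [← mul_assoc, hn]

end Variance

theorem stmt7_general {d M : ℕ} {Ω : Type*} [MeasurableSpace Ω]
    (μ : Measure Ω) [IsProbabilityMeasure μ]
    (p : Measure (EuclideanSpace ℝ (Fin d))) [IsProbabilityMeasure p]
    (V : Fin M → Submodule ℝ (EuclideanSpace ℝ (Fin d)))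
    (hsupp : p (⋃ i, (V i : Set (EuclideanSpace ℝ (Fin d))))ᶜ = 0)
    (N : ℕ) (X : Fin N → Ω → EuclideanSpace ℝ (Fin d))
    (hmeas : ∀ j, Measurable (X j))
    (hiid : iIndepFun X μ)
    (hlaw : ∀ j, μ.map (X j) = p)
    (t : ℝ) (ht : 0 < t) (x : EuclideanSpace ℝ (Fin d)) :
    variance (fun ω => (N : ℝ)⁻¹ * ∑ j, gpdf d t (x - X j ω)) μ
      ≤ (1 / ((2 * π * t) ^ ((d : ℝ) / 2) * N)) *
        ∑ i, Real.exp (-‖x - ((V i).orthogonalProjectionOnto x : EuclideanSpace ℝ (Fin d))‖ ^ 2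
            / (2 * t)) *
          (∫ y in (V i : Set (EuclideanSpace ℝ (Fin d))), gpdf d t (x - y) ∂p) := by
  set c := (2 * π * t) ^ (-(d : ℝ) / 2)
  set g := fun y => gpdf d t (x - y)
  have hg : Continuous g := continuous_gpdf.comp (continuous_sub_left x)
  have hg_memLp : ∀ ν : Measure (EuclideanSpace ℝ (Fin d)), MemLp g ⊤ ν := fun ν =>
    memLp_top_of_bound hg.aestronglyMeasurable c (.of_forall fun y => norm_gpdf_le ht _)
  have hsecond : ∫ y, g y ^ 2 ∂p ≤ ∑ i, (c * Real.exp
      (-‖x - (V i).starProjection x‖ ^ 2 / (2 * t))) * ∫ y in (V i : Set _), g y ∂p := by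
    refine integral_sq_le_sum_mul_setIntegral hsupp
      (fun i => (V i).closed_of_finiteDimensional.measurableSet) ((hg_memLp p).integrable le_top)
      ((hg_memLp p).mono_exponent le_top).integrable_sq fun i y hy => ?_
    rw [sq]
    exact mul_le_mul_of_nonneg_right (gpdf_sub_le_of_mem ht _ x hy) (gpdf_nonneg ht.le _)
  have hvar : ∀ j, variance (fun ω => g (X j ω)) μ ≤ ∫ y, g y ^ 2 ∂p := fun j =>
    hlaw j ▸ variance_comp_le_integral_sq_map (hmeas j).aemeasurable hg.measurable
  have hmean := variance_mean_le
    (fun j => ((hg_memLp (μ.map (X j))).comp_of_map (hmeas j).aemeasurable).mono_exponent le_top)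
    (fun j k hjk => (hiid.indepFun hjk).comp hg.measurable hg.measurable)
    fun j => (hvar j).trans hsecond
  rw [Fintype.card_fin] at hmean
  refine hmean.trans_eq ?_
  have hc : c = ((2 * π * t) ^ ((d : ℝ) / 2))⁻¹ := by
    rw [← Real.rpow_neg (by positivity), ← neg_div]
  rw [Finset.mul_sum, Finset.mul_sum]
  refine Finset.sum_congr rfl fun i _ => ?_
  rw [hc, Submodule.starProjection_apply]
  ring

/-- Variance bound for the kernel density estimator under a union-of-subspaces
support: `Var(p̂_t(x)) ≤ (1/((2πt)^{d/2} N)) Σᵢ e^{−‖x−projᵢ(x)‖²/(2t)} q_t(i,x)`. -/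
theorem stmt7 {d M : ℕ} {Ω : Type*} [MeasurableSpace Ω]
    (μ : Measure Ω) [IsProbabilityMeasure μ]
    (p : Measure (EuclideanSpace ℝ (Fin d))) [IsProbabilityMeasure p]
    (V : Fin M → Submodule ℝ (EuclideanSpace ℝ (Fin d)))
    (hsupp : p (⋃ i, (V i : Set (EuclideanSpace ℝ (Fin d))))ᶜ = 0)
    (hnull : ∀ i j, i ≠ j →
      p ((V i : Set (EuclideanSpace ℝ (Fin d))) ∩ (V j : Set (EuclideanSpace ℝ (Fin d)))) = 0)
    (N : ℕ) (hN : 0 < N) (X : Fin N → Ω → EuclideanSpace ℝ (Fin d))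
    (hmeas : ∀ j, Measurable (X j))
    (hiid : iIndepFun X μ)
    (hlaw : ∀ j, μ.map (X j) = p)
    (t : ℝ) (ht : 0 < t) (x : EuclideanSpace ℝ (Fin d)) :
    variance (fun ω => (N : ℝ)⁻¹ * ∑ j, gpdf d t (x - X j ω)) μ
      ≤ (1 / ((2 * π * t) ^ ((d : ℝ) / 2) * N)) *
        ∑ i, Real.exp (-‖x - ((V i).orthogonalProjectionOnto x : EuclideanSpace ℝ (Fin d))‖ ^ 2
            / (2 * t)) *
          (∫ y in (V i : Set (EuclideanSpace ℝ (Fin d))), gpdf d t (x - y) ∂p) :=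
  stmt7_general μ p V hsupp N X hmeas hiid hlaw t ht x
end
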